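/- Let t ≥ 3 and let a_1 ≤ ... ≤ a_t and b_1 ≤ ... ≤ b_t be integers satisfying a_{i-1} > b_i for 2 ≤ i ≤ t and a_i ≥ b_{i+3} for 1 ≤ i ≤ t-3 (and a_1 ≥ b_t if t = 3). Set s = Σ a_j - Σ b_i. Then a_t - s + b_i - a_k - a_j < 0 for all 1 ≤ i ≤ t and 1 ≤ k < j ≤ t-1. -/
import Mathlib

open Finset

private lemma stmt5_aux (t : ℕ) (ht : 3 ≤ t) (A B : ℕ → ℤ)
    (hA : ∀ m m' : ℕ, m ≤ m' → m' < t → A m ≤ A m')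
    (hB : ∀ m m' : ℕ, m ≤ m' → m' < t → B m ≤ B m')
    (h1 : ∀ m : ℕ, m + 1 < t → B (m + 1) < A m)
    (h2 : ∀ m : ℕ, m + 3 < t → B (m + 3) ≤ A m)
    (i k j : ℕ) (hi : i < t) (hk : k < j) (hj : j < t - 1) :
    B 0 + B i + ∑ m ∈ Ico 1 t, B m < A k + A j + ∑ m ∈ range (t - 1), A m := by
  have hB0 : B 0 ≤ A k := by
    have u1 := h1 0 (by omega)
    have u2 := hB 0 1 (by omega) (by omega)
    have u3 := hA 0 k (by omega) (by omega)
    linarith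
  rcases le_or_gt i (j + 1) with hij | hij
  · -- case i ≤ j + 1
    have hBi : B i < A j := by
      have u1 := h1 j (by omega)
      have u2 := hB i (j + 1) hij (by omega)
      linarith
    have hs : ∑ m ∈ Ico 1 t, B m ≤ ∑ m ∈ range (t - 1), A m := by
      rw [Finset.sum_Ico_eq_sum_range]
      have e : t - 1 = t - 1 := rfl
      apply Finset.sum_le_sum
      intro m hm
      rw [Finset.mem_range] at hm
      have e2 : 1 + m = m + 1 := by omega
      rw [e2]
      exact le_of_lt (h1 m (by omega))
    linarith
  · -- case j + 2 ≤ i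
    obtain ⟨p, rfl⟩ : ∃ p, i = p + 1 := ⟨i - 1, by omega⟩
    obtain ⟨q, rfl⟩ : ∃ q, j = q + 1 := ⟨j - 1, by omega⟩
    have hpt : p + 1 < t := hi
    have hq : q + 3 ≤ p + 1 := by omega
    -- split the B-sum
    have e1 : ∑ m ∈ Ico 1 (q + 3), B m + ∑ m ∈ Ico (q + 3) t, B m
        = ∑ m ∈ Ico 1 t, B m := Finset.sum_Ico_consecutive _ (by omega) (by omega)
    have e2 : ∑ m ∈ Ico (q + 3) (p + 2), B m + ∑ m ∈ Ico (p + 2) t, B m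
        = ∑ m ∈ Ico (q + 3) t, B m := Finset.sum_Ico_consecutive _ (by omega) (by omega)
    have e3 : ∑ m ∈ Ico (q + 3) (p + 2), B m
        = B (q + 3) + ∑ m ∈ Ico (q + 4) (p + 2), B m :=
      Finset.sum_eq_sum_Ico_succ_bot (by omega) _
    -- split the A-sum
    have f1 : ∑ m ∈ Ico 0 (q + 2), A m + ∑ m ∈ Ico (q + 2) (t - 1), A m
        = ∑ m ∈ range (t - 1), A m := by
      rw [Finset.range_eq_Ico]
      exact Finset.sum_Ico_consecutive _ (by omega) (by omega)
    have f2 : ∑ m ∈ Ico (q + 2) p, A m + ∑ m ∈ Ico p (t - 1), A m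
        = ∑ m ∈ Ico (q + 2) (t - 1), A m := Finset.sum_Ico_consecutive _ (by omega) (by omega)
    have f3 : ∑ m ∈ Ico p (t - 1), A m = A p + ∑ m ∈ Ico (p + 1) (t - 1), A m :=
      Finset.sum_eq_sum_Ico_succ_bot (by omega) _
    -- (a) ∑_{m=1}^{q+2} B m ≤ ∑_{m=0}^{q+1} A m
    have ga : ∑ m ∈ Ico 1 (q + 3), B m ≤ ∑ m ∈ Ico 0 (q + 2), A m := by
      rw [Finset.sum_Ico_eq_sum_range, Finset.sum_Ico_eq_sum_range]
      have ec : q + 3 - 1 = q + 2 - 0 := by omega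
      rw [ec]
      apply Finset.sum_le_sum
      intro m hm
      rw [Finset.mem_range] at hm
      have e2 : 1 + m = m + 1 := by omega
      have e3 : 0 + m = m := by omega
      rw [e2, e3]
      exact le_of_lt (h1 m (by omega))
    -- (b) B (q+3) ≤ A (q+1)
    have gb : B (q + 3) ≤ A (q + 1) := by
      have u1 := h2 q (by omega)
      have u2 := hA q (q + 1) (by omega) (by omega)
      linarith
    -- (c) ∑_{m=q+4}^{p+1} B m ≤ ∑_{m=q+2}^{p-1} A m
    have gc : ∑ m ∈ Ico (q + 4) (p + 2), B m ≤ ∑ m ∈ Ico (q + 2) p, A m := by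
      rw [Finset.sum_Ico_eq_sum_range, Finset.sum_Ico_eq_sum_range]
      have ec : p + 2 - (q + 4) = p - (q + 2) := by omega
      rw [ec]
      apply Finset.sum_le_sum
      intro m hm
      rw [Finset.mem_range] at hm
      have e2 : q + 4 + m = (q + 1 + m) + 3 := by omega
      have e3 : q + 2 + m = (q + 1 + m) + 1 := by omega
      rw [e2, e3]
      have u1 := h2 (q + 1 + m) (by omega)
      have u2 := hA (q + 1 + m) (q + 1 + m + 1) (by omega) (by omega)
      linarith
    -- (d) B (p+1) < A p
    have gd : B (p + 1) < A p := h1 p (by omega)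
    -- (e) ∑_{m=p+2}^{t-1} B m ≤ ∑_{m=p+1}^{t-2} A m
    have ge : ∑ m ∈ Ico (p + 2) t, B m ≤ ∑ m ∈ Ico (p + 1) (t - 1), A m := by
      rw [Finset.sum_Ico_eq_sum_range, Finset.sum_Ico_eq_sum_range]
      have ec : t - (p + 2) = t - 1 - (p + 1) := by omega
      rw [ec]
      apply Finset.sum_le_sum
      intro m hm
      rw [Finset.mem_range] at hm
      have e2 : p + 2 + m = (p + 1 + m) + 1 := by omega
      rw [e2]
      exact le_of_lt (h1 (p + 1 + m) (by omega))
    linarith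

/-- with `t ≥ 3`, monotone `a`, `b`, `a_{i-1} > b_i` for
`2 ≤ i ≤ t`, `a_i ≥ b_{i+3}` for `1 ≤ i ≤ t-3` (and `a_1 ≥ b_t` if `t = 3`),
and `s = ∑ a - ∑ b`, one has `a_t - s + b_i - a_k - a_j < 0` for all `i`
and all `k < j ≤ t - 1`. -/
theorem stmt5 (t : ℕ) (ht : 3 ≤ t) (a b : Fin t → ℤ)
    (ha : Monotone a) (hb : Monotone b)
    (h1 : ∀ j : Fin t, ∀ h : (j : ℕ) + 1 < t, b ⟨(j : ℕ) + 1, h⟩ < a j)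
    (h2 : ∀ i : Fin t, ∀ h : (i : ℕ) + 3 < t, b ⟨(i : ℕ) + 3, h⟩ ≤ a i)
    (h3 : t = 3 → b ⟨t - 1, by omega⟩ ≤ a ⟨0, by omega⟩) :
    ∀ i k j : Fin t, k < j → (j : ℕ) < t - 1 →
      a ⟨t - 1, by omega⟩ - (∑ x, a x - ∑ x, b x) + b i - a k - a j < 0 := by
  intro i k j hkj hjt
  set A : ℕ → ℤ := fun m => if h : m < t then a ⟨m, h⟩ else 0 with hAdef
  set B : ℕ → ℤ := fun m => if h : m < t then b ⟨m, h⟩ else 0 with hBdef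
  have hAval : ∀ (m : ℕ) (h : m < t), A m = a ⟨m, h⟩ := by
    intro m h; simp [hAdef, h]
  have hBval : ∀ (m : ℕ) (h : m < t), B m = b ⟨m, h⟩ := by
    intro m h; simp [hBdef, h]
  have hAmono : ∀ m m' : ℕ, m ≤ m' → m' < t → A m ≤ A m' := by
    intro m m' hmm hm'
    rw [hAval m (by omega), hAval m' hm']
    exact ha (by exact hmm)
  have hBmono : ∀ m m' : ℕ, m ≤ m' → m' < t → B m ≤ B m' := by
    intro m m' hmm hm'
    rw [hBval m (by omega), hBval m' hm']
    exact hb (by exact hmm)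
  have h1' : ∀ m : ℕ, m + 1 < t → B (m + 1) < A m := by
    intro m hm
    rw [hAval m (by omega), hBval (m + 1) hm]
    exact h1 ⟨m, by omega⟩ hm
  have h2' : ∀ m : ℕ, m + 3 < t → B (m + 3) ≤ A m := by
    intro m hm
    rw [hAval m (by omega), hBval (m + 3) hm]
    exact h2 ⟨m, by omega⟩ hm
  have eA : ∑ x, a x = ∑ m ∈ range t, A m := by
    rw [← Fin.sum_univ_eq_sum_range A t]
    apply Finset.sum_congr rfl
    intro x _
    rw [hAval (x : ℕ) x.isLt]
  have eB : ∑ x, b x = ∑ m ∈ range t, B m := by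
    rw [← Fin.sum_univ_eq_sum_range B t]
    apply Finset.sum_congr rfl
    intro x _
    rw [hBval (x : ℕ) x.isLt]
  have eAsplit : ∑ m ∈ range t, A m = ∑ m ∈ range (t - 1), A m + A (t - 1) := by
    have e : t = (t - 1) + 1 := by omega
    rw [e, Finset.sum_range_succ]
    congr 1 <;> omega
  have eBsplit : ∑ m ∈ range t, B m = B 0 + ∑ m ∈ Ico 1 t, B m := by
    rw [Finset.range_eq_Ico]
    exact Finset.sum_eq_sum_Ico_succ_bot (by omega) _
  have key := stmt5_aux t ht A B hAmono hBmono h1' h2' (i : ℕ) (k : ℕ) (j : ℕ)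
    i.isLt hkj hjt
  have ea1 : a ⟨t - 1, by omega⟩ = A (t - 1) := (hAval (t - 1) (by omega)).symm
  have ea2 : b i = B (i : ℕ) := by rw [hBval (i : ℕ) i.isLt]
  have ea3 : a k = A (k : ℕ) := by rw [hAval (k : ℕ) k.isLt]
  have ea4 : a j = A (j : ℕ) := by rw [hAval (j : ℕ) j.isLt]
  rw [ea1, ea2, ea3, ea4, eA, eB, eAsplit, eBsplit]
  linarith
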